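/- arXiv:2201.05586 — 4 statements merged into one kernel-verified Lean document; each statement's English description precedes it below -/
import Mathlib

section
/- The variance of the ELM surrogate with exponential activation satisfies var(f̂) = Σ_{j=1}^n Σ_{i=1}^n β_j β_i e^{b_j + b_i} ( ∏_{l=1}^d ε(w_{j,l} + w_{i,l}) − ∏_{r=1}^d ε(w_{j,r}) ε(w_{i,r}) ), where var(f̂) = E(f̂²) − (E(f̂))² and expectations are taken over x uniformly distributed on [0,1]^d. -/
/-!
A neuron `exp (wᵀx + b)` factorises across the coordinates of `x`, so by Fubini its integral
over the unit cube is `e^b ∏ ε(w_l)`. The square of an ELM surrogate is again a sum of such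
neurons, with weights `w_j + w_i` and biases `b_j + b_i`, so both moments are explicit sums.
-/

open MeasureTheory Real

/-- The function ε(t) = (e^t − 1)/t for t ≠ 0, and ε(0) = 1. -/
noncomputable def eps (t : ℝ) : ℝ := if t = 0 then 1 else (Real.exp t - 1) / t

/-- ELM surrogate with exponential activation:
`f̂(x) = Σ_{j=1}^n β_j exp(w_jᵀ x + b_j)`. -/
noncomputable def elm {d n : ℕ} (β b : Fin n → ℝ) (w : Fin n → Fin d → ℝ)
    (x : Fin d → ℝ) : ℝ :=
  ∑ j, β j * Real.exp ((∑ l, w j l * x l) + b j)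

theorem setIntegral_Icc_prod_eq_prod {ι : Type*} [Fintype ι] (f : ι → ℝ → ℝ) (a b : ι → ℝ) :
    ∫ x in Set.Icc a b, ∏ i, f i (x i) = ∏ i, ∫ t in Set.Icc (a i) (b i), f i t := by
  rw [← Set.pi_univ_Icc, volume_pi, Measure.restrict_pi_pi, integral_fintype_prod_eq_prod]

theorem setIntegral_Icc_exp_mul (c : ℝ) : ∫ t in Set.Icc (0 : ℝ) 1, exp (c * t) = eps c := by
  rcases eq_or_ne c 0 with rfl | hc
  · simp [eps]
  · rw [integral_Icc_eq_integral_Ioc, ← intervalIntegral.integral_of_le zero_le_one,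
      intervalIntegral.integral_comp_mul_left (fun t => exp t) hc]
    simp [eps, hc, integral_exp, div_eq_inv_mul]

theorem setIntegral_Icc_exp_sum_mul {ι : Type*} [Fintype ι] (c : ι → ℝ) :
    ∫ x in Set.Icc (0 : ι → ℝ) 1, exp (∑ i, c i * x i) = ∏ i, eps (c i) := by
  simp_rw [exp_sum]
  rw [setIntegral_Icc_prod_eq_prod (fun i t => exp (c i * t))]
  simp only [Pi.zero_apply, Pi.one_apply, setIntegral_Icc_exp_mul]

theorem setIntegral_Icc_sum_mul_exp_sum_mul {ι κ : Type*} [Fintype ι] [Fintype κ]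
    (a : κ → ℝ) (c : κ → ι → ℝ) :
    ∫ x in Set.Icc (0 : ι → ℝ) 1, ∑ k, a k * exp (∑ i, c k i * x i) =
      ∑ k, a k * ∏ i, eps (c k i) := by
  have hint : ∀ k, IntegrableOn (fun x : ι → ℝ => a k * exp (∑ i, c k i * x i)) (Set.Icc 0 1) :=
    fun k => (by fun_prop : Continuous _).continuousOn.integrableOn_compact isCompact_Icc
  rw [integral_finsetSum _ fun k _ => hint k]
  simp_rw [integral_const_mul, setIntegral_Icc_exp_sum_mul]

section
variable {d n : ℕ} (β b : Fin n → ℝ) (w : Fin n → Fin d → ℝ)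

theorem elm_eq_sum (x : Fin d → ℝ) :
    elm β b w x = ∑ j, β j * exp (b j) * exp (∑ l, w j l * x l) := by
  refine Finset.sum_congr rfl fun j _ => ?_
  rw [exp_add]; ring

theorem elm_sq_eq_sum (x : Fin d → ℝ) :
    elm β b w x ^ 2 = ∑ p : Fin n × Fin n,
      β p.1 * β p.2 * exp (b p.1 + b p.2) * exp (∑ l, (w p.1 l + w p.2 l) * x l) := by
  rw [elm_eq_sum, sq, Finset.sum_mul_sum, ← Finset.sum_product']
  refine Finset.sum_congr rfl fun p _ => ?_
  simp only [add_mul, Finset.sum_add_distrib, exp_add]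
  ring

theorem integral_elm :
    ∫ x in Set.Icc (0 : Fin d → ℝ) 1, elm β b w x = ∑ j, β j * exp (b j) * ∏ l, eps (w j l) := by
  simp_rw [elm_eq_sum]
  exact setIntegral_Icc_sum_mul_exp_sum_mul _ w

theorem integral_elm_sq :
    ∫ x in Set.Icc (0 : Fin d → ℝ) 1, elm β b w x ^ 2 =
      ∑ j, ∑ i, β j * β i * exp (b j + b i) * ∏ l, eps (w j l + w i l) := by
  simp_rw [elm_sq_eq_sum]
  rw [setIntegral_Icc_sum_mul_exp_sum_mul (fun p : Fin n × Fin n => _)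
    (fun p l => w p.1 l + w p.2 l), Fintype.sum_prod_type]

end

theorem elm_variance_general (d n : ℕ)
    (β b : Fin n → ℝ) (w : Fin n → Fin d → ℝ) :
    (∫ x in Set.Icc (0 : Fin d → ℝ) 1, (elm β b w x) ^ 2) -
        (∫ x in Set.Icc (0 : Fin d → ℝ) 1, elm β b w x) ^ 2 =
      ∑ j, ∑ i, β j * β i * Real.exp (b j + b i) *
        ((∏ l, eps (w j l + w i l)) - ∏ r, eps (w j r) * eps (w i r)) := by
  rw [integral_elm_sq, integral_elm, sq, Finset.sum_mul_sum, ← Finset.sum_sub_distrib]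
  refine Finset.sum_congr rfl fun j _ => ?_
  rw [← Finset.sum_sub_distrib]
  refine Finset.sum_congr rfl fun i _ => ?_
  rw [exp_add, Finset.prod_mul_distrib]
  ring

/-- Variance of the ELM surrogate, `var(f̂) = E(f̂²) − (E(f̂))²`, over the uniform
measure on `[0,1]^d`:
`var(f̂) = Σ_j Σ_i β_j β_i e^{b_j+b_i} (∏_l ε(w_{j,l}+w_{i,l}) − ∏_r ε(w_{j,r}) ε(w_{i,r}))`. -/
theorem elm_variance (d n : ℕ) (hd : 0 < d) (hn : 0 < n)
    (β b : Fin n → ℝ) (w : Fin n → Fin d → ℝ) :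
    (∫ x in Set.Icc (0 : Fin d → ℝ) 1, (elm β b w x) ^ 2) -
        (∫ x in Set.Icc (0 : Fin d → ℝ) 1, elm β b w x) ^ 2 =
      ∑ j, ∑ i, β j * β i * Real.exp (b j + b i) *
        ((∏ l, eps (w j l + w i l)) - ∏ r, eps (w j r) * eps (w i r)) :=
  elm_variance_general d n β b w
end

section
/- Fix k ∈ {1,…,d} and define g_k : [0,1] → ℝ by g_k(t) = ∫_{[0,1]^{d−1}} f̂(x) dx_{−k}, the integral of f̂ over all coordinates except x_k, with x_k = t. Then the variance of g_k (with t uniform on [0,1]) equals Σ_{j=1}^n Σ_{i=1}^n β_j β_i e^{b_j + b_i} ( ε(w_{j,k} + w_{i,k}) − ε(w_{j,k}) ε(w_{i,k}) ) ∏_{l≠k} ε(w_{j,l}) ε(w_{i,l}). -/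
/-! Integrating out the coordinates `l ≠ k` factorizes each neuron by Fubini, so `g_k` is the
exponential sum `t ↦ Σ_j A_j e^{w_{j,k} t}` with `A_j = β_j e^{b_j} ∏_{l≠k} ε(w_{j,l})`. Since
`∫₀¹ e^{a t} dt = ε(a)`, its mean is `Σ_j A_j ε(w_{j,k})` and, squaring the sum, its second moment
is `Σ_j Σ_i A_j A_i ε(w_{j,k} + w_{i,k})`. -/

open MeasureTheory Real

/-- For fixed `t`, `g_k(t) = ∫_{[0,1]^{d−1}} f̂(x) dx_{−k}` with `x_k = t`:
the integral of the ELM surrogate over all coordinates except the `k`-th one. -/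
noncomputable def gk {d n : ℕ} (β b : Fin n → ℝ) (w : Fin n → Fin d → ℝ)
    (k : Fin d) (t : ℝ) : ℝ :=
  ∫ y in Set.Icc (0 : Fin d → ℝ) 1, elm β b w (Function.update y k t)

open Finset

lemma integral_exp_mul_Icc (a : ℝ) :
    ∫ t in Set.Icc (0 : ℝ) 1, exp (a * t) = eps a := by
  rw [integral_Icc_eq_integral_Ioc, ← intervalIntegral.integral_of_le zero_le_one]
  unfold eps
  split_ifs with h
  · simp [h]
  · rw [intervalIntegral.integral_comp_mul_left (fun x => exp x) h]
    simp only [mul_zero, mul_one, integral_exp, exp_zero, smul_eq_mul]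
    ring

lemma integral_Icc_pi_prod {ι : Type*} [Fintype ι] (f : ι → ℝ → ℝ) :
    ∫ y in Set.Icc (0 : ι → ℝ) 1, ∏ i, f i (y i) = ∏ i, ∫ t in Set.Icc (0 : ℝ) 1, f i t := by
  rw [← Set.pi_univ_Icc, volume_pi, Measure.restrict_pi_pi]
  exact integral_fintype_prod_eq_prod f

lemma integral_Icc_pi_prod_update {ι : Type*} [Fintype ι] [DecidableEq ι] (f : ι → ℝ → ℝ)
    (k : ι) (t : ℝ) :
    ∫ y in Set.Icc (0 : ι → ℝ) 1, ∏ i, f i (Function.update y k t i) =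
      f k t * ∏ i ∈ univ.erase k, ∫ s in Set.Icc (0 : ℝ) 1, f i s := by
  simp only [Function.update_apply]
  rw [integral_Icc_pi_prod (fun i s => f i (if i = k then t else s)),
    ← mul_prod_erase univ _ (mem_univ k)]
  congr 1
  · simp
  · exact prod_congr rfl fun i hi => by simp only [if_neg (ne_of_mem_erase hi)]

noncomputable def expSum {ι : Type*} [Fintype ι] (c a : ι → ℝ) (t : ℝ) : ℝ :=
  ∑ j, c j * exp (a j * t)

section expSum

variable {ι : Type*} [Fintype ι] (c a : ι → ℝ)

lemma integral_expSum :
    ∫ t in Set.Icc (0 : ℝ) 1, expSum c a t = ∑ j, c j * eps (a j) := by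
  unfold expSum
  rw [integral_finsetSum _ fun j _ => Continuous.integrableOn_Icc (by fun_prop)]
  simp_rw [integral_const_mul, integral_exp_mul_Icc]

lemma expSum_sq (t : ℝ) :
    expSum c a t ^ 2 = expSum (fun p : ι × ι => c p.1 * c p.2) (fun p => a p.1 + a p.2) t := by
  rw [expSum, expSum, sq, sum_mul_sum, ← Fintype.sum_prod_type']
  refine sum_congr rfl fun p _ => ?_
  rw [add_mul, exp_add]
  ring

lemma integral_expSum_sq :
    ∫ t in Set.Icc (0 : ℝ) 1, expSum c a t ^ 2 = ∑ j, ∑ i, c j * c i * eps (a j + a i) := by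
  simp_rw [expSum_sq, integral_expSum, Fintype.sum_prod_type]

lemma integral_expSum_sq_sub_sq :
    (∫ t in Set.Icc (0 : ℝ) 1, expSum c a t ^ 2) - (∫ t in Set.Icc (0 : ℝ) 1, expSum c a t) ^ 2 =
      ∑ j, ∑ i, c j * c i * (eps (a j + a i) - eps (a j) * eps (a i)) := by
  rw [integral_expSum_sq, integral_expSum, sq, sum_mul_sum, ← sum_sub_distrib]
  refine sum_congr rfl fun j _ => ?_
  rw [← sum_sub_distrib]
  refine sum_congr rfl fun i _ => ?_
  ring

end expSum

lemma gk_eq_expSum {d n : ℕ} (β b : Fin n → ℝ) (w : Fin n → Fin d → ℝ) (k : Fin d) :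
    gk β b w k =
      expSum (fun j => β j * exp (b j) * ∏ l ∈ univ.erase k, eps (w j l)) (fun j => w j k) := by
  funext t
  have hterm : ∀ j (y : Fin d → ℝ), β j * exp ((∑ l, w j l * Function.update y k t l) + b j) =
      β j * exp (b j) * ∏ l, exp (w j l * Function.update y k t l) := by
    intro j y
    rw [exp_add, exp_sum]
    ring
  unfold gk elm expSum
  rw [integral_finsetSum _ fun j _ => Continuous.integrableOn_Icc (by fun_prop)]
  refine sum_congr rfl fun j _ => ?_
  simp_rw [hterm, integral_const_mul, integral_Icc_pi_prod_update (fun l s => exp (w j l * s)),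
    integral_exp_mul_Icc]
  ring

theorem elm_var_condExp_single_general (d n : ℕ)
    (β b : Fin n → ℝ) (w : Fin n → Fin d → ℝ) (k : Fin d) :
    (∫ t in Set.Icc (0 : ℝ) 1, (gk β b w k t) ^ 2) -
        (∫ t in Set.Icc (0 : ℝ) 1, gk β b w k t) ^ 2 =
      ∑ j, ∑ i, β j * β i * Real.exp (b j + b i) *
        (eps (w j k + w i k) - eps (w j k) * eps (w i k)) *
        ∏ l ∈ Finset.univ.erase k, eps (w j l) * eps (w i l) := by
  rw [gk_eq_expSum, integral_expSum_sq_sub_sq]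
  refine sum_congr rfl fun j _ => sum_congr rfl fun i _ => ?_
  rw [exp_add, prod_mul_distrib]
  ring

/-- The variance of `g_k` (with `t` uniform on `[0,1]`) equals
`Σ_j Σ_i β_j β_i e^{b_j+b_i} (ε(w_{j,k}+w_{i,k}) − ε(w_{j,k}) ε(w_{i,k}))
  ∏_{l≠k} ε(w_{j,l}) ε(w_{i,l})`. -/
theorem elm_var_condExp_single (d n : ℕ) (hd : 0 < d) (hn : 0 < n)
    (β b : Fin n → ℝ) (w : Fin n → Fin d → ℝ) (k : Fin d) :
    (∫ t in Set.Icc (0 : ℝ) 1, (gk β b w k t) ^ 2) -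
        (∫ t in Set.Icc (0 : ℝ) 1, gk β b w k t) ^ 2 =
      ∑ j, ∑ i, β j * β i * Real.exp (b j + b i) *
        (eps (w j k + w i k) - eps (w j k) * eps (w i k)) *
        ∏ l ∈ Finset.univ.erase k, eps (w j l) * eps (w i l) :=
  elm_var_condExp_single_general d n β b w k
end

section
/- Fix k ∈ {1,…,d} and define h_k : [0,1]^{d−1} → ℝ by h_k(x_{−k}) = ∫₀¹ f̂(x) dx_k, the integral of f̂ over the coordinate x_k with the remaining coordinates fixed. Then the variance of h_k (with x_{−k} uniform on [0,1]^{d−1}) equals Σ_{j=1}^n Σ_{i=1}^n β_j β_i e^{b_j + b_i} ε(w_{j,k}) ε(w_{i,k}) ( ∏_{r≠k} ε(w_{j,r} + w_{i,r}) − ∏_{r≠k} ε(w_{j,r}) ε(w_{i,r}) ). -/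
open MeasureTheory Real

/-- `h_k(x_{−k}) = ∫₀¹ f̂(x) dx_k`: the integral of the ELM surrogate over the
`k`-th coordinate with the remaining coordinates fixed (the value of `h_k` does
not depend on the `k`-th entry of `x`). -/
noncomputable def hk {d n : ℕ} (β b : Fin n → ℝ) (w : Fin n → Fin d → ℝ)
    (k : Fin d) (x : Fin d → ℝ) : ℝ :=
  ∫ t in Set.Icc (0 : ℝ) 1, elm β b w (Function.update x k t)

lemma integral_exp_Icc (c : ℝ) : ∫ t in Set.Icc (0:ℝ) 1, Real.exp (c * t) = eps c := by
  rw [MeasureTheory.integral_Icc_eq_integral_Ioc,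
    ← intervalIntegral.integral_of_le (zero_le_one)]
  rcases eq_or_ne c 0 with h | h
  · simp [h, eps]
  · rw [intervalIntegral.integral_comp_mul_left (fun u => Real.exp u) h]
    simp [integral_exp, eps, h, smul_eq_mul, div_eq_inv_mul]

lemma restrict_Icc_pi (d : ℕ) :
    (volume : Measure (Fin d → ℝ)).restrict (Set.Icc 0 1)
      = Measure.pi (fun _ : Fin d => (volume : Measure ℝ).restrict (Set.Icc 0 1)) := by
  rw [← Set.pi_univ_Icc]
  refine (Measure.pi_eq (μ := fun _ : Fin d => (volume : Measure ℝ).restrict (Set.Icc 0 1)) fun s hs => ?_).symm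
  rw [Measure.restrict_apply (MeasurableSet.univ_pi hs), ← Set.pi_inter_distrib,
    volume_pi_pi]
  exact Finset.prod_congr rfl fun i _ =>
    (Measure.restrict_apply (hs i)).symm

lemma my_integral_pi_prod {d : ℕ} (μ : Measure ℝ) [SigmaFinite μ] (f : Fin d → ℝ → ℝ) :
    ∫ x, ∏ i, f i (x i) ∂(Measure.pi fun _ : Fin d => μ) = ∏ i, ∫ t, f i t ∂μ := by
  letI : MeasureSpace ℝ := ⟨μ⟩
  haveI : SigmaFinite (volume : Measure ℝ) := ‹_›
  exact MeasureTheory.integral_fin_nat_prod_eq_prod f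

lemma integral_box_exp {d : ℕ} (c : Fin d → ℝ) :
    ∫ x in Set.Icc (0 : Fin d → ℝ) 1, Real.exp (∑ r, c r * x r) = ∏ r, eps (c r) := by
  have : ∀ x : Fin d → ℝ, Real.exp (∑ r, c r * x r) = ∏ r, Real.exp (c r * x r) := by
    intro x; rw [Real.exp_sum]
  simp_rw [this]
  rw [restrict_Icc_pi, my_integral_pi_prod ((volume : Measure ℝ).restrict (Set.Icc 0 1)) (fun i t => Real.exp (c i * t))]
  exact Finset.prod_congr rfl fun r _ => integral_exp_Icc (c r)

lemma integral_box_exp_erase {d : ℕ} (c : Fin d → ℝ) (k : Fin d) :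
    ∫ x in Set.Icc (0 : Fin d → ℝ) 1,
        Real.exp (∑ r ∈ Finset.univ.erase k, c r * x r)
      = ∏ r ∈ Finset.univ.erase k, eps (c r) := by
  have h := integral_box_exp (fun r => if r = k then 0 else c r)
  have e1 : ∀ x : Fin d → ℝ, (∑ r, (if r = k then 0 else c r) * x r)
      = ∑ r ∈ Finset.univ.erase k, c r * x r := by
    intro x
    rw [← Finset.add_sum_erase _ (fun r => (if r = k then 0 else c r) * x r)
      (Finset.mem_univ k), if_pos rfl, zero_mul, zero_add]
    exact Finset.sum_congr rfl fun r hr => by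
      rw [if_neg (Finset.ne_of_mem_erase hr)]
  have e2 : (∏ r, eps (if r = k then 0 else c r))
      = ∏ r ∈ Finset.univ.erase k, eps (c r) := by
    rw [← Finset.mul_prod_erase _ (fun r => eps (if r = k then 0 else c r))
      (Finset.mem_univ k), if_pos rfl]
    have : eps 0 = 1 := by simp [eps]
    rw [this, one_mul]
    exact Finset.prod_congr rfl fun r hr => by
      rw [if_neg (Finset.ne_of_mem_erase hr)]
  simp_rw [e1, e2] at h
  exact h

lemma hk_eq {d n : ℕ} (β b : Fin n → ℝ) (w : Fin n → Fin d → ℝ) (k : Fin d)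
    (x : Fin d → ℝ) :
    hk β b w k x = ∑ j, (β j * Real.exp (b j) * eps (w j k)) *
      Real.exp (∑ r ∈ Finset.univ.erase k, w j r * x r) := by
  unfold hk elm
  have h1 : ∀ t : ℝ, (∑ j, β j * Real.exp ((∑ l, w j l * (Function.update x k t) l) + b j))
      = ∑ j, (β j * Real.exp (b j) *
          Real.exp (∑ r ∈ Finset.univ.erase k, w j r * x r)) * Real.exp (w j k * t) := by
    intro t
    refine Finset.sum_congr rfl fun j _ => ?_
    have hs : (∑ l, w j l * (Function.update x k t) l)
        = w j k * t + ∑ r ∈ Finset.univ.erase k, w j r * x r := by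
      rw [← Finset.add_sum_erase _ (fun l => w j l * (Function.update x k t) l)
        (Finset.mem_univ k), Function.update_self]
      congr 1
      exact Finset.sum_congr rfl fun r hr => by
        rw [Function.update_of_ne (Finset.ne_of_mem_erase hr)]
    rw [hs, Real.exp_add, Real.exp_add]
    ring
  simp_rw [h1]
  rw [MeasureTheory.integral_finset_sum _ (fun j _ =>
    ((by fun_prop : Continuous fun t : ℝ => Real.exp (w j k * t)).integrableOn_Icc.const_mul _))]
  refine Finset.sum_congr rfl fun j _ => ?_
  rw [MeasureTheory.integral_const_mul, integral_exp_Icc]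
  ring

/-- The variance of `h_k` (with `x_{−k}` uniform on `[0,1]^{d−1}`) equals
`Σ_j Σ_i β_j β_i e^{b_j+b_i} ε(w_{j,k}) ε(w_{i,k})
  (∏_{r≠k} ε(w_{j,r}+w_{i,r}) − ∏_{r≠k} ε(w_{j,r}) ε(w_{i,r}))`. -/
theorem elm_var_condExp_except_single (d n : ℕ) (hd : 0 < d) (hn : 0 < n)
    (β b : Fin n → ℝ) (w : Fin n → Fin d → ℝ) (k : Fin d) :
    (∫ x in Set.Icc (0 : Fin d → ℝ) 1, (hk β b w k x) ^ 2) -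
        (∫ x in Set.Icc (0 : Fin d → ℝ) 1, hk β b w k x) ^ 2 =
      ∑ j, ∑ i, β j * β i * Real.exp (b j + b i) *
        (eps (w j k) * eps (w i k)) *
        ((∏ r ∈ Finset.univ.erase k, eps (w j r + w i r)) -
          ∏ r ∈ Finset.univ.erase k, eps (w j r) * eps (w i r)) := by
  set A : Fin n → ℝ := fun j => β j * Real.exp (b j) * eps (w j k) with hA
  set S : Fin n → (Fin d → ℝ) → ℝ :=
    fun j x => ∑ r ∈ Finset.univ.erase k, w j r * x r with hS
  have h1 : ∀ x, hk β b w k x = ∑ j, A j * Real.exp (S j x) := fun x => hk_eq β b w k x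
  have hScont : ∀ j, Continuous fun x : Fin d → ℝ => Real.exp (S j x) := by
    intro j
    fun_prop
  have hI2 : (∫ x in Set.Icc (0 : Fin d → ℝ) 1, hk β b w k x)
      = ∑ j, A j * ∏ r ∈ Finset.univ.erase k, eps (w j r) := by
    simp_rw [h1]
    rw [MeasureTheory.integral_finset_sum _ (fun j _ =>
      ((hScont j).integrableOn_Icc.const_mul _))]
    refine Finset.sum_congr rfl fun j _ => ?_
    rw [MeasureTheory.integral_const_mul, integral_box_exp_erase (fun r => w j r) k]
  have hsq : ∀ x : Fin d → ℝ, (∑ j, A j * Real.exp (S j x)) ^ 2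
      = ∑ j, ∑ i, (A j * A i) *
          Real.exp (∑ r ∈ Finset.univ.erase k, (w j r + w i r) * x r) := by
    intro x
    rw [sq, Finset.sum_mul_sum]
    refine Finset.sum_congr rfl fun j _ => Finset.sum_congr rfl fun i _ => ?_
    have hadd : S j x + S i x = ∑ r ∈ Finset.univ.erase k, (w j r + w i r) * x r := by
      rw [hS, ← Finset.sum_add_distrib]
      exact Finset.sum_congr rfl fun r _ => by ring
    rw [← hadd, Real.exp_add]
    ring
  have hI1 : (∫ x in Set.Icc (0 : Fin d → ℝ) 1, (hk β b w k x) ^ 2)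
      = ∑ j, ∑ i, (A j * A i) * ∏ r ∈ Finset.univ.erase k, eps (w j r + w i r) := by
    simp_rw [h1, hsq]
    rw [MeasureTheory.integral_finset_sum _ (fun j _ => MeasureTheory.integrable_finset_sum _
      (fun i _ => (((by fun_prop : Continuous fun x : Fin d → ℝ =>
        Real.exp (∑ r ∈ Finset.univ.erase k, (w j r + w i r) * x r))).integrableOn_Icc.const_mul _)))]
    refine Finset.sum_congr rfl fun j _ => ?_
    rw [MeasureTheory.integral_finset_sum _ (fun i _ =>
      (((by fun_prop : Continuous fun x : Fin d → ℝ =>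
        Real.exp (∑ r ∈ Finset.univ.erase k, (w j r + w i r) * x r))).integrableOn_Icc.const_mul _))]
    refine Finset.sum_congr rfl fun i _ => ?_
    rw [MeasureTheory.integral_const_mul, integral_box_exp_erase (fun r => w j r + w i r) k]
  rw [hI1, hI2, sq, Finset.sum_mul_sum, ← Finset.sum_sub_distrib]
  refine Finset.sum_congr rfl fun j _ => ?_
  rw [← Finset.sum_sub_distrib]
  refine Finset.sum_congr rfl fun i _ => ?_
  have hp : (∏ r ∈ Finset.univ.erase k, eps (w j r)) *
      (∏ r ∈ Finset.univ.erase k, eps (w i r))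
      = ∏ r ∈ Finset.univ.erase k, eps (w j r) * eps (w i r) :=
    (Finset.prod_mul_distrib).symm
  rw [Real.exp_add, ← hp]
  simp only [hA]
  ring
end

section
/- The variance of the benchmark function f_δ with respect to the uniform measure on [0,1]^d is var(f_δ) = (dδ/9)(3/2)^d + δ² ( (7/3)^d − (9/4)^d ) + d/12. -/
open MeasureTheory Real

/-- Benchmark function `f_δ(x) = Σ_{i=1}^d x_i + δ ∏_{j=1}^d (1 + x_j)` on `[0,1]^d`. -/
noncomputable def fdelta {d : ℕ} (δ : ℝ) (x : Fin d → ℝ) : ℝ :=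
  (∑ i, x i) + δ * ∏ j, (1 + x j)

/-!
By Fubini, the integral over the unit cube of a product `∏ k, g_k (x_k)` of functions of
separate coordinates is the product of the one-dimensional integrals over `[0,1]`. Expanding `f_δ²`,
every moment that occurs is of this form: a factor `x_i` (or `x_i x_j`) only changes the
one-dimensional factor at `i` (and `j`).
-/

open Finset

theorem setIntegral_Icc_zero_one_eq_intervalIntegral (f : ℝ → ℝ) :
    ∫ t in Set.Icc (0 : ℝ) 1, f t = ∫ t in (0 : ℝ)..1, f t := by
  rw [integral_Icc_eq_integral_Ioc, intervalIntegral.integral_of_le zero_le_one]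

theorem setIntegral_unitInterval_id : ∫ t in Set.Icc (0 : ℝ) 1, t = 1 / 2 := by
  simp [setIntegral_Icc_zero_one_eq_intervalIntegral]

theorem setIntegral_unitInterval_mul_self : ∫ t in Set.Icc (0 : ℝ) 1, t * t = 1 / 3 := by
  norm_num [setIntegral_Icc_zero_one_eq_intervalIntegral, ← sq]

theorem setIntegral_unitInterval_one_add : ∫ t in Set.Icc (0 : ℝ) 1, (1 + t) = 3 / 2 := by
  rw [setIntegral_Icc_zero_one_eq_intervalIntegral,
    intervalIntegral.integral_comp_add_left (fun t => t)]
  norm_num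

theorem setIntegral_unitInterval_one_add_sq :
    ∫ t in Set.Icc (0 : ℝ) 1, (1 + t) ^ 2 = 7 / 3 := by
  rw [setIntegral_Icc_zero_one_eq_intervalIntegral,
    intervalIntegral.integral_comp_add_left (fun t => t ^ 2)]
  norm_num

theorem setIntegral_unitInterval_mul_one_add :
    ∫ t in Set.Icc (0 : ℝ) 1, t * (1 + t) = 5 / 6 := by
  rw [setIntegral_Icc_zero_one_eq_intervalIntegral]
  norm_num [mul_add, ← sq, intervalIntegral.integral_add]

section UnitCube

variable {ι : Type*} [Fintype ι]

theorem setIntegral_pi_Icc_prod (a b : ι → ℝ) (g : ι → ℝ → ℝ) :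
    ∫ x in Set.Icc a b, ∏ i, g i (x i) = ∏ i, ∫ t in Set.Icc (a i) (b i), g i t := by
  rw [← Set.pi_univ_Icc, volume_pi, Measure.restrict_pi_pi, integral_fintype_prod_eq_prod]

theorem setIntegral_unitCube_prod (g : ι → ℝ → ℝ) :
    ∫ x in Set.Icc (0 : ι → ℝ) 1, ∏ i, g i (x i) = ∏ i, ∫ t in Set.Icc (0 : ℝ) 1, g i t :=
  setIntegral_pi_Icc_prod 0 1 g

theorem setIntegral_unitCube_mul_prod [DecidableEq ι] (i : ι) (φ : ℝ → ℝ) (g : ι → ℝ → ℝ) :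
    ∫ x in Set.Icc (0 : ι → ℝ) 1, φ (x i) * ∏ k, g k (x k) =
      (∫ t in Set.Icc (0 : ℝ) 1, φ t * g i t) *
        ∏ k ∈ univ.erase i, ∫ t in Set.Icc (0 : ℝ) 1, g k t := by
  set G := Function.update g i fun t => φ t * g i t
  have hG : ∀ k ∈ univ.erase i, G k = g k := fun k hk =>
    Function.update_of_ne (ne_of_mem_erase hk) _ _
  calc ∫ x in Set.Icc (0 : ι → ℝ) 1, φ (x i) * ∏ k, g k (x k)
      = ∫ x in Set.Icc (0 : ι → ℝ) 1, ∏ k, G k (x k) := by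
        congr 1 with x
        rw [← mul_prod_erase _ _ (mem_univ i), ← mul_prod_erase _ (fun k => G k (x k)) (mem_univ i),
          prod_congr rfl fun k hk => congrFun (hG k hk) (x k)]
        simp [G, mul_assoc]
    _ = _ := by
        rw [setIntegral_unitCube_prod, ← mul_prod_erase _ _ (mem_univ i)]
        congr 1
        · simp [G]
        · exact prod_congr rfl fun k hk => by rw [hG k hk]

theorem setIntegral_unitCube_coord (i : ι) : ∫ x in Set.Icc (0 : ι → ℝ) 1, x i = 1 / 2 := by
  classical
  simpa [setIntegral_unitInterval_id] using setIntegral_unitCube_mul_prod i id fun _ _ => 1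

theorem setIntegral_unitCube_coord_mul_coord [DecidableEq ι] (i j : ι) :
    ∫ x in Set.Icc (0 : ι → ℝ) 1, x i * x j = 1 / 4 + if i = j then 1 / 12 else 0 := by
  by_cases h : i = j
  · subst h
    rw [if_pos rfl, show (1 : ℝ) / 4 + 1 / 12 = 1 / 3 by norm_num]
    simpa [setIntegral_unitInterval_mul_self] using
      setIntegral_unitCube_mul_prod i (fun t => t * t) fun _ _ => 1
  · have key := setIntegral_unitCube_mul_prod i id fun k t => if k = j then t else 1
    simp only [id, prod_ite_eq', mem_univ, if_true] at key
    have hj : j ∈ univ.erase i := mem_erase.2 ⟨Ne.symm h, mem_univ j⟩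
    rw [key, prod_eq_single j (fun k _ hk => by simp [hk]) (absurd hj)]
    norm_num [h, setIntegral_unitInterval_id]

theorem setIntegral_unitCube_coord_mul_prod_one_add (i : ι) :
    ∫ x in Set.Icc (0 : ι → ℝ) 1, x i * ∏ k, (1 + x k) = 5 / 9 * (3 / 2) ^ Fintype.card ι := by
  classical
  refine (setIntegral_unitCube_mul_prod i id fun _ t => 1 + t).trans ?_
  simp only [id, setIntegral_unitInterval_mul_one_add, setIntegral_unitInterval_one_add,
    prod_const, card_erase_of_mem (mem_univ i), card_univ]
  rw [← mul_pow_sub_one (Fintype.card_pos_iff.2 ⟨i⟩).ne' (3 / 2 : ℝ)]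
  ring

theorem setIntegral_unitCube_prod_one_add :
    ∫ x in Set.Icc (0 : ι → ℝ) 1, ∏ k, (1 + x k) = (3 / 2) ^ Fintype.card ι := by
  rw [setIntegral_unitCube_prod fun _ t => 1 + t]
  simp [setIntegral_unitInterval_one_add, div_pow]

theorem setIntegral_unitCube_prod_one_add_sq :
    ∫ x in Set.Icc (0 : ι → ℝ) 1, (∏ k, (1 + x k)) ^ 2 = (7 / 3) ^ Fintype.card ι := by
  simp_rw [← prod_pow]
  rw [setIntegral_unitCube_prod fun _ t => (1 + t) ^ 2]
  simp [setIntegral_unitInterval_one_add_sq, div_pow]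

theorem setIntegral_unitCube_sum_coord :
    ∫ x in Set.Icc (0 : ι → ℝ) 1, ∑ i, x i = Fintype.card ι / 2 := by
  rw [integral_finsetSum _ fun i _ => (continuous_apply i).integrableOn_Icc]
  simp [setIntegral_unitCube_coord, div_eq_mul_inv]

theorem setIntegral_unitCube_sum_coord_sq :
    ∫ x in Set.Icc (0 : ι → ℝ) 1, (∑ i, x i) ^ 2 =
      Fintype.card ι * (Fintype.card ι / 4 + 1 / 12) := by
  classical
  have hrow (i : ι) :
      ∫ x in Set.Icc (0 : ι → ℝ) 1, ∑ j, x i * x j = Fintype.card ι / 4 + 1 / 12 := by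
    rw [integral_finsetSum]
    · simp [setIntegral_unitCube_coord_mul_coord, sum_add_distrib, div_eq_mul_inv]
    · exact fun j _ => Continuous.integrableOn_Icc (by fun_prop)
  simp_rw [sq, sum_mul_sum]
  rw [integral_finsetSum]
  · simp only [hrow, sum_const, card_univ, nsmul_eq_mul]
  · exact fun i _ => Continuous.integrableOn_Icc (by fun_prop)

theorem setIntegral_unitCube_sum_coord_mul_prod_one_add :
    ∫ x in Set.Icc (0 : ι → ℝ) 1, (∑ i, x i) * ∏ k, (1 + x k) =
      Fintype.card ι * (5 / 9 * (3 / 2) ^ Fintype.card ι) := by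
  simp_rw [sum_mul]
  rw [integral_finsetSum]
  · simp [setIntegral_unitCube_coord_mul_prod_one_add]
  · exact fun i _ => Continuous.integrableOn_Icc (by fun_prop)

end UnitCube

theorem setIntegral_fdelta (d : ℕ) (δ : ℝ) :
    ∫ x in Set.Icc (0 : Fin d → ℝ) 1, fdelta δ x = d / 2 + δ * (3 / 2) ^ d := by
  unfold fdelta
  rw [integral_add, integral_const_mul, setIntegral_unitCube_sum_coord,
    setIntegral_unitCube_prod_one_add, Fintype.card_fin]
  all_goals exact Continuous.integrableOn_Icc (by fun_prop)

theorem setIntegral_fdelta_sq (d : ℕ) (δ : ℝ) :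
    ∫ x in Set.Icc (0 : Fin d → ℝ) 1, fdelta δ x ^ 2 =
      d * (d / 4 + 1 / 12) + 2 * δ * (d * (5 / 9 * (3 / 2) ^ d)) + δ ^ 2 * (7 / 3) ^ d := by
  have hexpand (x : Fin d → ℝ) : fdelta δ x ^ 2 = (∑ i, x i) ^ 2 +
      (2 * δ * ((∑ i, x i) * ∏ j, (1 + x j)) + δ ^ 2 * (∏ j, (1 + x j)) ^ 2) := by
    unfold fdelta; ring
  simp_rw [hexpand]
  rw [integral_add, integral_add, integral_const_mul, integral_const_mul,
    setIntegral_unitCube_sum_coord_sq, setIntegral_unitCube_sum_coord_mul_prod_one_add,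
    setIntegral_unitCube_prod_one_add_sq, Fintype.card_fin, add_assoc]
  all_goals exact Continuous.integrableOn_Icc (by fun_prop)

theorem fdelta_variance_general (d : ℕ) (δ : ℝ) :
    (∫ x in Set.Icc (0 : Fin d → ℝ) 1, (fdelta δ x) ^ 2) -
        (∫ x in Set.Icc (0 : Fin d → ℝ) 1, fdelta δ x) ^ 2 =
      (d : ℝ) * δ / 9 * (3 / 2 : ℝ) ^ d +
        δ ^ 2 * ((7 / 3 : ℝ) ^ d - (9 / 4 : ℝ) ^ d) + (d : ℝ) / 12 := by
  have h94 : (9 / 4 : ℝ) ^ d = ((3 / 2) ^ d) ^ 2 := by rw [sq, ← mul_pow]; norm_num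
  rw [setIntegral_fdelta_sq, setIntegral_fdelta, h94]
  ring

/-- Variance of `f_δ` over the uniform measure on `[0,1]^d`:
`var(f_δ) = (dδ/9)(3/2)^d + δ²((7/3)^d − (9/4)^d) + d/12`. -/
theorem fdelta_variance (d : ℕ) (hd : 0 < d) (δ : ℝ) :
    (∫ x in Set.Icc (0 : Fin d → ℝ) 1, (fdelta δ x) ^ 2) -
        (∫ x in Set.Icc (0 : Fin d → ℝ) 1, fdelta δ x) ^ 2 =
      (d : ℝ) * δ / 9 * (3 / 2 : ℝ) ^ d +
        δ ^ 2 * ((7 / 3 : ℝ) ^ d - (9 / 4 : ℝ) ^ d) + (d : ℝ) / 12 :=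
  fdelta_variance_general d δ
end
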